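/- The function R_4(t) = \frac{1}{2}\sqrt{\frac{(1-4t)e^{-4t} - (2-4t+12t^2-8t^3)e^{-2t} + 1}{t^2((1-2t)e^{-2t}-1)^2}} satisfies R_4(t) = \frac{1}{2t} + O(t^{1/2} e^{-t}) as t \to \infty. -/

import Mathlib

/-!
Put `u = exp (-2 t)` and `E = (1 - 2 t) u - 1`. The numerator under the square root is
`E ^ 2 + M` with `M = -4 t² u² + (8 t³ - 12 t²) u = O(t³ u)`, so the radicand is
`1 / t² + M / (t E)²`. Since `E ≤ -1` and `|√a - c| ≤ |a - c²| / c`, the error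
`R4 t - 1 / (2 t)` is `O(t² u) = O(t² e^{-2t})`, which is `t^{1/2} e^{-t}` times the null
sequence `t^{3/2} e^{-t}`.
-/

open Filter Asymptotics

noncomputable def R4 (t : ℝ) : ℝ :=
  (1 / 2) * Real.sqrt
    (((1 - 4 * t) * Real.exp (-4 * t)
        - (2 - 4 * t + 12 * t ^ 2 - 8 * t ^ 3) * Real.exp (-2 * t) + 1) /
      (t ^ 2 * ((1 - 2 * t) * Real.exp (-2 * t) - 1) ^ 2))

open Real

lemma abs_sqrt_sub_le {a c : ℝ} (hc : 0 < c) : |√a - c| ≤ |a - c ^ 2| / c := by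
  rw [le_div_iff₀ hc]
  rcases le_or_gt 0 a with ha | ha
  · have hsq := sq_sqrt ha
    calc |√a - c| * c ≤ |√a - c| * (√a + c) := by gcongr; linarith [sqrt_nonneg a]
      _ = |a - c ^ 2| := by
        rw [← abs_of_nonneg (by positivity : 0 ≤ √a + c), ← abs_mul]
        congr 1
        nlinarith
  · rw [sqrt_eq_zero_of_nonpos ha.le, zero_sub, abs_neg, abs_of_pos hc,
      abs_of_neg (by nlinarith)]
    nlinarith

lemma abs_half_sqrt_sub_inv_le {t u : ℝ} (ht : 1 ≤ t) (hu0 : 0 ≤ u) (hu1 : u ≤ 1) :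
    |(1 / 2) * √(((1 - 4 * t) * u ^ 2 - (2 - 4 * t + 12 * t ^ 2 - 8 * t ^ 3) * u + 1) /
        (t ^ 2 * ((1 - 2 * t) * u - 1) ^ 2)) - 1 / (2 * t)| ≤ 12 * t ^ 2 * u := by
  set N := (1 - 4 * t) * u ^ 2 - (2 - 4 * t + 12 * t ^ 2 - 8 * t ^ 3) * u + 1
  set E := (1 - 2 * t) * u - 1
  set M := -4 * t ^ 2 * u ^ 2 + (8 * t ^ 3 - 12 * t ^ 2) * u
  have ht0 : 0 < t := by linarith
  have hE : 1 ≤ E ^ 2 := by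
    have : E ≤ -1 := by simp only [E]; nlinarith [mul_nonneg hu0 (sub_nonneg.2 ht)]
    nlinarith
  have hE0 : E ≠ 0 := by rintro h; norm_num [h] at hE
  have hN : N = E ^ 2 + M := by simp only [N, E, M]; ring
  have hradicand : N / (t ^ 2 * E ^ 2) - (1 / t) ^ 2 = M / (t ^ 2 * E ^ 2) := by
    rw [hN]; field_simp; ring
  have hM : |M| ≤ 24 * t ^ 3 * u := by
    rw [abs_le]
    constructor <;> nlinarith [mul_nonneg (mul_nonneg hu0 (sub_nonneg.2 hu1)) (sq_nonneg t),
      mul_nonneg (mul_nonneg hu0 (sub_nonneg.2 ht)) (sq_nonneg t)]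
  calc |(1 / 2) * √(N / (t ^ 2 * E ^ 2)) - 1 / (2 * t)|
        = |1 / 2 * (√(N / (t ^ 2 * E ^ 2)) - 1 / t)| := by congr 1; ring
    _ = 1 / 2 * |√(N / (t ^ 2 * E ^ 2)) - 1 / t| := by rw [abs_mul, abs_of_pos one_half_pos]
    _ ≤ 1 / 2 * (|M / (t ^ 2 * E ^ 2)| / (1 / t)) := by
        rw [← hradicand]; gcongr; exact abs_sqrt_sub_le (by positivity)
    _ = t * |M| / (2 * t ^ 2 * E ^ 2) := by
        rw [abs_div, abs_of_pos (by positivity : 0 < t ^ 2 * E ^ 2)]; field_simp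
    _ ≤ t * (24 * t ^ 3 * u) / (2 * t ^ 2 * 1) := by gcongr
    _ = 12 * t ^ 2 * u := by field_simp; ring

lemma isBigO_R4_sub_inv :
    (fun t : ℝ => R4 t - 1 / (2 * t)) =O[atTop] fun t => t ^ 2 * exp (-2 * t) := by
  refine IsBigO.of_bound 12 ?_
  filter_upwards [eventually_ge_atTop 1] with t ht
  have hexp : exp (-4 * t) = exp (-2 * t) ^ 2 := by rw [← exp_nat_mul]; ring_nf
  have hbound := abs_half_sqrt_sub_inv_le ht (exp_pos (-2 * t)).le
    (exp_le_one_iff.2 (by linarith))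
  rw [R4, hexp, norm_eq_abs, norm_eq_abs,
    abs_of_nonneg (by positivity : 0 ≤ t ^ 2 * exp (-2 * t))]
  linarith

lemma isBigO_sq_mul_exp_neg_two_mul :
    (fun t : ℝ => t ^ 2 * exp (-2 * t)) =O[atTop] fun t => t ^ ((1 : ℝ) / 2) * exp (-t) := by
  have hdecay := tendsto_rpow_mul_exp_neg_mul_atTop_nhds_zero (3 / 2) 1 one_pos
  refine ((isBigO_refl (fun t : ℝ => t ^ ((1 : ℝ) / 2) * exp (-t)) atTop).mul
    (hdecay.isBigO_one ℝ)).congr' ?_ (by simp)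
  filter_upwards [eventually_gt_atTop 0] with t ht
  rw [mul_mul_mul_comm, ← rpow_add ht, ← exp_add, ← rpow_natCast]
  norm_num
  left; ring

theorem stmt13 :
    (fun t : ℝ => R4 t - 1 / (2 * t))
      =O[atTop] fun t : ℝ => t ^ ((1 : ℝ) / 2) * Real.exp (-t) :=
  isBigO_R4_sub_inv.trans isBigO_sq_mul_exp_neg_two_mul
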